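/- Let f be differentiable and L-smooth, g_i (i = 1,...,m) convex differentiable, C compact convex, p > L, and λ ≥ 0. Define L_p(x, z, λ) = f(x) + Σ λ_i g_i(x) + (p/2)‖x - z‖², and for z, z' ∈ C let the minimizers over C be x(λ, z) and x(λ, z'). Then ‖x(λ, z) - x(λ, z')‖ ≤ (p/(p-L))‖z - z'‖. -/

import Mathlib

/-!
For fixed `z`, the proximal Lagrangian `x ↦ L_p(x, z, λ)` is `(p - L)`-strongly convex: an
`L`-Lipschitz gradient makes `f + (L/2)‖·‖²` convex, the penalty `Σ λᵢ gᵢ` is convex, and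
`(p/2)‖· - z‖²` is `p`-strongly convex. Strong convexity turns minimality of `x(λ, z)` over `C`
into `L_p(x(λ, z), z, λ) + ((p - L)/2)‖u - x(λ, z)‖² ≤ L_p(u, z, λ)` for `u ∈ C`. Adding this
inequality at `(z, u = x(λ, z'))` and `(z', u = x(λ, z))`, the `f` and `g` terms cancel and
`(p - L)‖x - x'‖² ≤ p ⟪x' - x, z' - z⟫ ≤ p ‖x - x'‖ ‖z - z'‖`.
-/

open scoped RealInnerProductSpace
open Set Filter Topology

lemma le_div_mul_of_mul_sq_le_mul_mul {a b c d : ℝ} (hc : 0 < c) (hd : 0 ≤ d) (hb : 0 ≤ b)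
    (h : c * a ^ 2 ≤ d * (a * b)) : a ≤ d / c * b := by
  rw [div_mul_eq_mul_div, le_div_iff₀ hc]
  rcases le_or_gt a 0 with ha | ha
  · nlinarith [mul_nonneg hd hb]
  · exact le_of_mul_le_mul_left (by linear_combination h) ha

section

variable {E : Type*} [NormedAddCommGroup E] {ι : Type*} [Fintype ι]

-- The paper's `L_p(x, z, λ)`, with `z` before `x` so that `proxLagrangian f g lam p z` is the
-- function minimized over `C`.
noncomputable def proxLagrangian (f : E → ℝ) (g : ι → E → ℝ) (lam : ι → ℝ) (p : ℝ)
    (z x : E) : ℝ :=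
  f x + (∑ i, lam i * g i x) + p / 2 * ‖x - z‖ ^ 2

lemma proxLagrangian_sub_proxLagrangian (f : E → ℝ) (g : ι → E → ℝ)
    (lam : ι → ℝ) (p : ℝ) (z z' x : E) :
    proxLagrangian f g lam p z x - proxLagrangian f g lam p z' x =
      p / 2 * (‖x - z‖ ^ 2 - ‖x - z'‖ ^ 2) := by
  unfold proxLagrangian
  ring

variable [InnerProductSpace ℝ E] {s : Set E}

lemma convexOn_of_le_add_inner {f : E → ℝ} (G : E → E) (hs : Convex ℝ s)
    (hf : ∀ u ∈ s, ∀ v ∈ s, f v + ⟪G v, u - v⟫ ≤ f u) : ConvexOn ℝ s f := by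
  refine ⟨hs, fun x hx y hy a b ha hb hab => ?_⟩
  set w := a • x + b • y
  have hw : w ∈ s := hs hx hy ha hb hab
  -- since `a • (x - w) + b • (y - w) = 0`
  have hcancel : a * ⟪G w, x - w⟫ + b * ⟪G w, y - w⟫ = 0 := by
    rw [← real_inner_smul_right, ← real_inner_smul_right, ← inner_add_right]
    convert inner_zero_right (G w)
    rw [smul_sub, smul_sub, sub_add_sub_comm, ← add_smul, hab, one_smul, sub_self]
  have hx' := mul_le_mul_of_nonneg_left (hf x hx w hw) ha
  have hy' := mul_le_mul_of_nonneg_left (hf y hy w hw) hb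
  have hsplit : f w = a * f w + b * f w := by rw [← add_mul, hab, one_mul]
  simp only [smul_eq_mul]
  linarith

lemma strongConvexOn_half_mul_norm_sub_sq (hs : Convex ℝ s) (m : ℝ) (z : E) :
    StrongConvexOn s m fun x => m / 2 * ‖x - z‖ ^ 2 := by
  refine ⟨hs, fun x _ y _ a b _ _ hab => le_of_eq ?_⟩
  have hw : a • x + b • y - z = a • (x - z) + b • (y - z) := by
    rw [smul_sub, smul_sub, sub_add_sub_comm, ← add_smul, hab, one_smul]
  have hxy : x - y = (x - z) - (y - z) := by abel
  dsimp only
  rw [hw, hxy]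
  generalize x - z = u, y - z = v
  rw [norm_add_sq_real, norm_sub_sq_real, norm_smul, norm_smul, real_inner_smul_left,
    real_inner_smul_right, Real.norm_eq_abs, Real.norm_eq_abs, mul_pow, mul_pow, sq_abs, sq_abs]
  obtain rfl := eq_sub_of_add_eq hab
  rw [smul_eq_mul, smul_eq_mul]
  ring

lemma StrongConvexOn.add_half_mul_norm_sub_sq_le_of_isMinOn {F : E → ℝ} {m : ℝ} {x u : E}
    (hF : StrongConvexOn s m F) (hxs : x ∈ s) (hx : IsMinOn F s x) (hu : u ∈ s) :
    F x + m / 2 * ‖u - x‖ ^ 2 ≤ F u := by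
  set c := m / 2 * ‖u - x‖ ^ 2
  -- compare `x` with the points `(1 - t) • x + t • u` and let `t → 0`
  have hstep : ∀ t ∈ Ioo (0 : ℝ) 1, F x + (1 - t) * c ≤ F u := by
    intro t ht
    have hconv := hF.2 hxs hu (sub_nonneg.2 ht.2.le) ht.1.le (sub_add_cancel 1 t)
    have hmin := isMinOn_iff.mp hx _
      (hF.1 hxs hu (sub_nonneg.2 ht.2.le) ht.1.le (sub_add_cancel 1 t))
    rw [smul_eq_mul, smul_eq_mul, norm_sub_rev] at hconv
    refine le_of_mul_le_mul_left ?_ ht.1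
    linear_combination hmin + hconv
  have hlim : Tendsto (fun t : ℝ => F x + (1 - t) * c) (𝓝[>] 0) (𝓝 (F x + c)) := by
    have : Continuous fun t : ℝ => F x + (1 - t) * c := by fun_prop
    simpa using (this.tendsto 0).mono_left nhdsWithin_le_nhds
  exact le_of_tendsto hlim (eventually_of_mem (Ioo_mem_nhdsGT zero_lt_one) hstep)

variable [CompleteSpace E] {f : E → ℝ} {f' : E → E} {L : ℝ}

lemma HasGradientAt.hasDerivAt_comp_add_smul {w v d : E} {t : ℝ}
    (hf : HasGradientAt f w (v + t • d)) :
    HasDerivAt (fun s : ℝ => f (v + s • d)) ⟪w, d⟫ t := by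
  have hline : HasDerivAt (fun s : ℝ => v + s • d) d t := by
    simpa using ((hasDerivAt_id t).smul_const d).const_add v
  have h := hf.hasFDerivAt.comp_hasDerivAt t hline
  simp only [InnerProductSpace.toDual_apply_apply] at h
  exact h

/-- The lower half of the descent lemma. -/
lemma sub_half_mul_norm_sq_le_of_lipschitz_gradient (hf : ∀ x, HasGradientAt f (f' x) x)
    (hf' : ∀ x y, ‖f' x - f' y‖ ≤ L * ‖x - y‖) (u v : E) :
    f v + ⟪f' v, u - v⟫ - L / 2 * ‖u - v‖ ^ 2 ≤ f u := by
  set d := u - v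
  -- `φ` is monotone on `[0, ∞)`, and `φ 0 ≤ φ 1` is the claim
  let φ : ℝ → ℝ := fun t => f (v + t • d) - t * ⟪f' v, d⟫ + L / 2 * t ^ 2 * ‖d‖ ^ 2
  have hφ : ∀ t, HasDerivAt φ (⟪f' (v + t • d), d⟫ - ⟪f' v, d⟫ + L * t * ‖d‖ ^ 2) t := by
    intro t
    have := (((hf (v + t • d)).hasDerivAt_comp_add_smul).sub
      ((hasDerivAt_id t).mul_const ⟪f' v, d⟫)).add
      (((hasDerivAt_pow 2 t).const_mul (L / 2)).mul_const (‖d‖ ^ 2))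
    exact this.congr_deriv (by push_cast; ring)
  have hφ' : ∀ t ∈ interior (Ici (0 : ℝ)),
      0 ≤ ⟪f' (v + t • d), d⟫ - ⟪f' v, d⟫ + L * t * ‖d‖ ^ 2 := by
    intro t ht
    rw [interior_Ici, mem_Ioi] at ht
    have hcs : -(‖f' (v + t • d) - f' v‖ * ‖d‖) ≤ ⟪f' (v + t • d) - f' v, d⟫ :=
      neg_le_of_abs_le (abs_real_inner_le_norm _ _)
    have hlip : ‖f' (v + t • d) - f' v‖ ≤ L * (t * ‖d‖) := by
      simpa [norm_smul, abs_of_pos ht] using hf' (v + t • d) v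
    rw [inner_sub_left] at hcs
    nlinarith [mul_le_mul_of_nonneg_right hlip (norm_nonneg d)]
  have hmono : MonotoneOn φ (Ici 0) :=
    monotoneOn_of_hasDerivWithinAt_nonneg (convex_Ici 0)
      (fun t _ => (hφ t).continuousAt.continuousWithinAt)
      (fun t _ => (hφ t).hasDerivWithinAt) hφ'
  have h01 := hmono self_mem_Ici (by norm_num : (1 : ℝ) ∈ Ici 0) zero_le_one
  simp only [φ, zero_smul, add_zero, one_smul, d, add_sub_cancel] at h01
  linarith

lemma strongConvexOn_neg_of_lipschitz_gradient (hs : Convex ℝ s)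
    (hf : ∀ x, HasGradientAt f (f' x) x) (hf' : ∀ x y, ‖f' x - f' y‖ ≤ L * ‖x - y‖) :
    StrongConvexOn s (-L) f := by
  rw [strongConvexOn_iff_convex]
  refine convexOn_of_le_add_inner (fun x => f' x + L • x) hs fun u _ v _ => ?_
  have hdescent := sub_half_mul_norm_sq_le_of_lipschitz_gradient hf hf' u v
  have hexpand : ‖u‖ ^ 2 = ‖v‖ ^ 2 + 2 * ⟪v, u - v⟫ + ‖u - v‖ ^ 2 := by
    rw [← norm_add_sq_real, add_sub_cancel]
  rw [inner_add_left, real_inner_smul_left]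
  linear_combination hdescent - L / 2 * hexpand

lemma strongConvexOn_proxLagrangian {g : ι → E → ℝ} {lam : ι → ℝ} (p : ℝ) (z : E)
    (hs : Convex ℝ s) (hf : ∀ x, HasGradientAt f (f' x) x)
    (hf' : ∀ x y, ‖f' x - f' y‖ ≤ L * ‖x - y‖)
    (hg : ∀ i, ConvexOn ℝ s (g i)) (hlam : ∀ i, 0 ≤ lam i) :
    StrongConvexOn s (p - L) (proxLagrangian f g lam p z) := by
  have hpenalty : ConvexOn ℝ s (∑ i, fun x => lam i * g i x) :=
    Finset.sum_induction _ (ConvexOn ℝ s) (fun _ _ => ConvexOn.add) (convexOn_const 0 hs)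
      fun i _ => (hg i).smul (hlam i)
  have hsum := ((strongConvexOn_neg_of_lipschitz_gradient hs hf hf').add
    (strongConvexOn_zero.mpr hpenalty)).add (strongConvexOn_half_mul_norm_sub_sq hs p z)
  have hsplit : proxLagrangian f g lam p z =
      f + (∑ i, fun x => lam i * g i x) + fun x => p / 2 * ‖x - z‖ ^ 2 := by
    funext x
    simp only [proxLagrangian, Pi.add_apply, Finset.sum_apply]
  rw [hsplit]
  exact hsum.mono fun r => le_of_eq (by simp only [Pi.add_apply]; ring)

end

theorem prox_lagrangian_minimizer_lipschitz_general
    {n m : ℕ} (f : EuclideanSpace ℝ (Fin n) → ℝ)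
    (f' : EuclideanSpace ℝ (Fin n) → EuclideanSpace ℝ (Fin n))
    (g : Fin m → EuclideanSpace ℝ (Fin n) → ℝ)
    (L p : ℝ) (hL : 0 ≤ L) (hp : L < p)
    (C : Set (EuclideanSpace ℝ (Fin n))) (hCconv : Convex ℝ C)
    (hdiff : ∀ x, HasGradientAt f (f' x) x)
    (hlip : ∀ x x', ‖f' x - f' x'‖ ≤ L * ‖x - x'‖)
    (hgconv : ∀ i, ConvexOn ℝ Set.univ (g i))
    (lam : Fin m → ℝ) (hlam : ∀ i, 0 ≤ lam i)
    (xm : EuclideanSpace ℝ (Fin n) → EuclideanSpace ℝ (Fin n))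
    (hxm : ∀ z, xm z ∈ C ∧
      ∀ u ∈ C, f (xm z) + (∑ i, lam i * g i (xm z)) + p / 2 * ‖xm z - z‖ ^ 2 ≤
        f u + (∑ i, lam i * g i u) + p / 2 * ‖u - z‖ ^ 2) :
    ∀ z ∈ C, ∀ z' ∈ C, ‖xm z - xm z'‖ ≤ p / (p - L) * ‖z - z'‖ := by
  intro z _ z' _
  set F := proxLagrangian f g lam p
  have hF : ∀ z, StrongConvexOn C (p - L) (F z) := fun z =>
    strongConvexOn_proxLagrangian p z hCconv hdiff hlip
      (fun i => (hgconv i).subset (subset_univ C) hCconv) hlam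
  have hgrowth : ∀ z u, u ∈ C → F z (xm z) + (p - L) / 2 * ‖u - xm z‖ ^ 2 ≤ F z u :=
    fun z u hu => (hF z).add_half_mul_norm_sub_sq_le_of_isMinOn (hxm z).1
      (isMinOn_iff.mpr (hxm z).2) hu
  have h := add_le_add (hgrowth z (xm z') (hxm z').1) (hgrowth z' (xm z) (hxm z).1)
  have hshift := proxLagrangian_sub_proxLagrangian f g lam p z z'
  have hpolar : ‖xm z' - z‖ ^ 2 - ‖xm z' - z'‖ ^ 2 - (‖xm z - z‖ ^ 2 - ‖xm z - z'‖ ^ 2) =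
      2 * ⟪xm z' - xm z, z' - z⟫ := by
    simp only [norm_sub_sq_real, inner_sub_left, inner_sub_right, real_inner_comm]
    ring
  have hmono : (p - L) * ‖xm z - xm z'‖ ^ 2 ≤ p * ⟪xm z' - xm z, z' - z⟫ := by
    rw [norm_sub_rev (xm z') (xm z)] at h
    linear_combination h + hshift (xm z') - hshift (xm z) + p / 2 * hpolar
  have hcs : ⟪xm z' - xm z, z' - z⟫ ≤ ‖xm z - xm z'‖ * ‖z - z'‖ := by
    rw [norm_sub_rev (xm z), norm_sub_rev z]
    exact real_inner_le_norm _ _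
  have hp0 : 0 ≤ p := hL.trans hp.le
  exact le_div_mul_of_mul_sq_le_mul_mul (sub_pos.mpr hp) hp0 (norm_nonneg _)
    (hmono.trans (mul_le_mul_of_nonneg_left hcs hp0))

/-- Lipschitz continuity in `z` of the minimizer `x(λ, z)` of the proximal Lagrangian
`L_p(x, z, λ) = f(x) + Σ λᵢ gᵢ(x) + (p/2)‖x - z‖²` over `C`:
`‖x(λ, z) - x(λ, z')‖ ≤ (p/(p-L))‖z - z'‖`. -/
theorem prox_lagrangian_minimizer_lipschitz
    {n m : ℕ} (f : EuclideanSpace ℝ (Fin n) → ℝ)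
    (f' : EuclideanSpace ℝ (Fin n) → EuclideanSpace ℝ (Fin n))
    (g : Fin m → EuclideanSpace ℝ (Fin n) → ℝ)
    (L p : ℝ) (hL : 0 ≤ L) (hp : L < p)
    (C : Set (EuclideanSpace ℝ (Fin n))) (hCcompact : IsCompact C) (hCconv : Convex ℝ C)
    (hdiff : ∀ x, HasGradientAt f (f' x) x)
    (hlip : ∀ x x', ‖f' x - f' x'‖ ≤ L * ‖x - x'‖)
    (hgconv : ∀ i, ConvexOn ℝ Set.univ (g i))
    (hgdiff : ∀ i, Differentiable ℝ (g i))
    (lam : Fin m → ℝ) (hlam : ∀ i, 0 ≤ lam i)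
    (xm : EuclideanSpace ℝ (Fin n) → EuclideanSpace ℝ (Fin n))
    (hxm : ∀ z, xm z ∈ C ∧
      ∀ u ∈ C, f (xm z) + (∑ i, lam i * g i (xm z)) + p / 2 * ‖xm z - z‖ ^ 2 ≤
        f u + (∑ i, lam i * g i u) + p / 2 * ‖u - z‖ ^ 2) :
    ∀ z ∈ C, ∀ z' ∈ C, ‖xm z - xm z'‖ ≤ p / (p - L) * ‖z - z'‖ :=
  prox_lagrangian_minimizer_lipschitz_general f f' g L p hL hp C hCconv hdiff hlip hgconv lam hlam
    xm hxm
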